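/- arXiv:1508.01640 — 2 statements merged into one kernel-verified Lean document; each statement's English description precedes it below -/
import Mathlib

section
/- The error probability of the LP decoder for the symbol-pair read channel is independent of the transmitted codeword: for every codeword x ∈ C, Σ_{ŷ ∈ B(x)} p(ŷ|x) = Σ_{ŷ ∈ B(0)} p(ŷ|0), where 0 denotes the all-zeros codeword. -/
open scoped BigOperators

/-- Symbol pairs: elements of Σ² with Σ = {0,1} represented as `ZMod 2`. -/
abbrev Pair := ZMod 2 × ZMod 2

/-- Cyclic successor index: `i + 1 (mod n)`. -/
def nxt {n : ℕ} (i : Fin n) : Fin n := ⟨(i.val + 1) % n, Nat.mod_lt _ i.pos⟩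

/-- Embedding of a binary vector into `ℝ^n`. -/
def emb {n : ℕ} (x : Fin n → ZMod 2) : Fin n → ℝ := fun i => ((x i).val : ℝ)

/-- The binary linear code with parity-check matrix `H`. -/
def code {m n : ℕ} (H : Fin m → Fin n → ZMod 2) : Set (Fin n → ZMod 2) :=
  {x | ∀ j, ∑ i, H j i * x i = 0}

/-- The local (single parity check) code of row `j` of `H`. -/
def localCode {m n : ℕ} (H : Fin m → Fin n → ZMod 2) (j : Fin m) : Set (Fin n → ZMod 2) :=
  {x | ∑ i, H j i * x i = 0}

/-- The fundamental polytope `Q(H)`: intersection of convex hulls of local codes. -/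
def fundPolytope {m n : ℕ} (H : Fin m → Fin n → ZMod 2) : Set (Fin n → ℝ) :=
  ⋂ j, convexHull ℝ (emb '' localCode H j)

/-- The LP feasible region `P(H)` of pairs `(x, τ)`. -/
def feasible {m n : ℕ} (H : Fin m → Fin n → ZMod 2) :
    Set ((Fin n → ℝ) × (Fin n → Pair → ℝ)) :=
  {xt | (∀ i ab, xt.2 i ab ∈ Set.Icc (0 : ℝ) 1) ∧
        (∀ i, ∑ ab : Pair, xt.2 i ab = 1) ∧
        (∀ i, xt.1 i = xt.2 i (1, 0) + xt.2 i (1, 1)) ∧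
        (∀ i, xt.1 (nxt i) = xt.2 i (0, 1) + xt.2 i (1, 1)) ∧
        xt.1 ∈ fundPolytope H}

/-- `T(x)`: the indicator vector of the symbol-pair read vector `π(x)`. -/
def indic {n : ℕ} (x : Fin n → ZMod 2) : Fin n → Pair → ℝ :=
  fun i ab => if (x i, x (nxt i)) = ab then 1 else 0

/-- Channel transition probability `p(y | a)` of the symbol-pair read channel. -/
noncomputable def chan (p : ℝ) (y a : Pair) : ℝ := if y = a then 1 - p else p / 3

/-- Likelihood `p(ŷ | x)` of the received pair vector `ŷ` given codeword `x`. -/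
noncomputable def lik {n : ℕ} (p : ℝ) (y : Fin n → Pair) (x : Fin n → ZMod 2) : ℝ :=
  ∏ i, chan p (y i) (x i, x (nxt i))

/-- The cost vector `λ = Λ(ŷ)`, `λ_{i,(a,b)} = -ln p(ŷ_i | (a,b))`. -/
noncomputable def Lam {n : ℕ} (p : ℝ) (y : Fin n → Pair) : Fin n → Pair → ℝ :=
  fun i ab => -Real.log (chan p (y i) ab)

/-- The pairing `⟨λ, τ⟩ = Σ_i Σ_{(a,b)} λ_{i,(a,b)} τ_{i,(a,b)}`. -/
def innerP {n : ℕ} (l t : Fin n → Pair → ℝ) : ℝ := ∑ i, ∑ ab : Pair, l i ab * t i ab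

/-- The fractional pair weight `W_fp`. -/
def Wfp {n : ℕ} (x : Fin n → ℝ) : ℝ := ∑ i, max (x i) (x (nxt i))

/-- The set `B(x)` of received vectors causing LP decoding failure when `x` was sent. -/
def Bset {m n : ℕ} (H : Fin m → Fin n → ZMod 2) (p : ℝ) (x : Fin n → ZMod 2) :
    Set (Fin n → Pair) :=
  {y | ∃ xt ∈ feasible H, xt.1 ≠ emb x ∧ innerP (Lam p y) xt.2 ≤ innerP (Lam p y) (indic x)}

/-!
Adding a codeword is a symmetry of the whole decoding problem. For `x ∈ C`, translate the
received pair vector by `π(x)`, reflect the LP variable `x'` in every coordinate where `x` is `1`,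
and translate each `τ_i` by `π(x)_i`. The reflection maps every local code `C_j` onto itself
(because `x ∈ C_j`), hence `Q(H)` and `P(H)` into themselves; the channel only depends on the
difference of the sent and received pair, so all costs are preserved; and `T(0)` goes to `T(x)`.
Therefore `ŷ ↦ ŷ + π(x)` is a bijection from `B(0)` onto `B(x)` that preserves likelihoods.
-/

lemma ZMod.two_eq_zero_or_one (u : ZMod 2) : u = 0 ∨ u = 1 := by
  revert u
  decide

lemma ZMod.two_val_one : (1 : ZMod 2).val = 1 := rfl

lemma ZMod.two_val_add_cast (a b : ZMod 2) :
    ((a + b).val : ℝ) = (1 - 2 * a.val) * b.val + a.val := by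
  rcases a.two_eq_zero_or_one with rfl | rfl <;> rcases b.two_eq_zero_or_one with rfl | rfl <;>
    simp only [add_zero, zero_add, show (1 + 1 : ZMod 2) = 0 from rfl, ZMod.val_zero,
      ZMod.two_val_one] <;> norm_num

section CodewordSymmetry

variable {m n : ℕ}

/-- The symbol-pair read vector `π(x)`. -/
def pairRead (x : Fin n → ZMod 2) (i : Fin n) : Pair := (x i, x (nxt i))

lemma sum_pair (f : Pair → ℝ) : ∑ ab, f ab = f (0, 0) + f (0, 1) + f (1, 0) + f (1, 1) := by
  simp only [Fintype.sum_prod_type]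
  rw [show (Finset.univ : Finset (ZMod 2)) = {0, 1} from rfl]
  simp only [Finset.sum_insert (show (0 : ZMod 2) ∉ {1} by decide), Finset.sum_singleton]
  ring

lemma fst_marginal_sub (q : Pair → ℝ) (hq : ∑ ab, q ab = 1) (a : Pair) :
    q ((1, 0) - a) + q ((1, 1) - a) = (1 - 2 * a.1.val) * (q (1, 0) + q (1, 1)) + a.1.val := by
  rw [sum_pair] at hq
  obtain ⟨a₁, a₂⟩ := a
  rcases a₁.two_eq_zero_or_one with rfl | rfl <;> rcases a₂.two_eq_zero_or_one with rfl | rfl <;>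
    simp only [Prod.mk_sub_mk, sub_zero, show (1 : ZMod 2) - 1 = 0 from rfl,
      show (0 : ZMod 2) - 1 = 1 from rfl, ZMod.val_zero, ZMod.two_val_one, Nat.cast_zero,
      Nat.cast_one] <;> linarith

lemma snd_marginal_sub (q : Pair → ℝ) (hq : ∑ ab, q ab = 1) (a : Pair) :
    q ((0, 1) - a) + q ((1, 1) - a) = (1 - 2 * a.2.val) * (q (0, 1) + q (1, 1)) + a.2.val := by
  rw [sum_pair] at hq
  obtain ⟨a₁, a₂⟩ := a
  rcases a₁.two_eq_zero_or_one with rfl | rfl <;> rcases a₂.two_eq_zero_or_one with rfl | rfl <;>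
    simp only [Prod.mk_sub_mk, sub_zero, show (1 : ZMod 2) - 1 = 0 from rfl,
      show (0 : ZMod 2) - 1 = 1 from rfl, ZMod.val_zero, ZMod.two_val_one, Nat.cast_zero,
      Nat.cast_one] <;> linarith

/-- The reflection `v_i ↦ 1 - v_i` in the coordinates where `x_i = 1`. -/
noncomputable def bitFlip (x : Fin n → ZMod 2) : (Fin n → ℝ) →ᵃ[ℝ] (Fin n → ℝ) :=
  (LinearMap.mulLeft ℝ (1 - 2 * emb x)).toAffineMap + AffineMap.const ℝ _ (emb x)

lemma bitFlip_apply (x : Fin n → ZMod 2) (v : Fin n → ℝ) (i : Fin n) :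
    bitFlip x v i = (1 - 2 * emb x i) * v i + emb x i := by
  simp [bitFlip]

lemma bitFlip_emb (x c : Fin n → ZMod 2) : bitFlip x (emb c) = emb (x + c) := by
  funext i
  rw [bitFlip_apply]
  exact ((x i).two_val_add_cast (c i)).symm

lemma bitFlip_involutive (x : Fin n → ZMod 2) : Function.Involutive (bitFlip x) := by
  intro v
  funext i
  simp only [bitFlip_apply, emb]
  rcases (x i).two_eq_zero_or_one with h | h <;> rw [h] <;> norm_num [ZMod.two_val_one]

lemma add_mem_localCode {H : Fin m → Fin n → ZMod 2} {x c : Fin n → ZMod 2} (hx : x ∈ code H)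
    {j : Fin m} (hc : c ∈ localCode H j) : x + c ∈ localCode H j := by
  simp only [localCode, Set.mem_ofPred_eq, Pi.add_apply, mul_add, Finset.sum_add_distrib] at hc ⊢
  rw [hx j, hc, add_zero]

lemma bitFlip_mem_fundPolytope {H : Fin m → Fin n → ZMod 2} {x : Fin n → ZMod 2}
    (hx : x ∈ code H) {v : Fin n → ℝ} (hv : v ∈ fundPolytope H) :
    bitFlip x v ∈ fundPolytope H := by
  simp only [fundPolytope, Set.mem_iInter] at hv ⊢
  intro j
  have hmem : bitFlip x v ∈ bitFlip x '' convexHull ℝ (emb '' localCode H j) :=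
    Set.mem_image_of_mem _ (hv j)
  rw [AffineMap.image_convexHull] at hmem
  refine convexHull_mono ?_ hmem
  rintro _ ⟨_, ⟨c, hc, rfl⟩, rfl⟩
  exact ⟨x + c, add_mem_localCode hx hc, (bitFlip_emb x c).symm⟩

def translatePair (a : Fin n → Pair) (t : Fin n → Pair → ℝ) : Fin n → Pair → ℝ :=
  fun i ab => t i (ab - a i)

lemma sum_translatePair (a : Fin n → Pair) (t : Fin n → Pair → ℝ) (i : Fin n) :
    ∑ ab, translatePair a t i ab = ∑ ab, t i ab :=
  Equiv.sum_comp (Equiv.subRight (a i)) (t i)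

lemma bitFlip_translatePair_mem_feasible {H : Fin m → Fin n → ZMod 2} {x : Fin n → ZMod 2}
    (hx : x ∈ code H) {v : Fin n → ℝ} {t : Fin n → Pair → ℝ} (h : (v, t) ∈ feasible H) :
    (bitFlip x v, translatePair (pairRead x) t) ∈ feasible H := by
  obtain ⟨hbox, hsum, hfst, hsnd, hv⟩ := h
  dsimp only at hsum hfst hsnd
  refine ⟨fun i ab => hbox i _, fun i => (sum_translatePair _ t i).trans (hsum i),
    fun i => ?_, fun i => ?_, bitFlip_mem_fundPolytope hx hv⟩ <;> dsimp only
  · rw [bitFlip_apply, hfst i]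
    exact (fst_marginal_sub (t i) (hsum i) (pairRead x i)).symm
  · rw [bitFlip_apply, hsnd i]
    exact (snd_marginal_sub (t i) (hsum i) (pairRead x i)).symm

lemma chan_add_right (p : ℝ) (u v w : Pair) : chan p (u + w) (v + w) = chan p u v := by
  simp only [chan, add_left_inj]

lemma innerP_Lam_add_translatePair (p : ℝ) (y a : Fin n → Pair) (t : Fin n → Pair → ℝ) :
    innerP (Lam p (y + a)) (translatePair a t) = innerP (Lam p y) t := by
  refine Finset.sum_congr rfl fun i _ => ?_
  refine (Fintype.sum_equiv (Equiv.addRight (a i)) _ _ fun ab => ?_).symm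
  simp only [Lam, translatePair, Pi.add_apply, Equiv.coe_addRight, add_sub_cancel_right,
    chan_add_right]

lemma translatePair_indic (x c : Fin n → ZMod 2) :
    translatePair (pairRead x) (indic c) = indic (x + c) := by
  funext i ab
  simp only [translatePair, indic, Pi.add_apply, eq_sub_iff_add_eq, add_comm]
  rfl

lemma add_pairRead_mem_Bset {H : Fin m → Fin n → ZMod 2} {p : ℝ} {x c : Fin n → ZMod 2}
    (hx : x ∈ code H) {y : Fin n → Pair} (hy : y ∈ Bset H p c) :
    y + pairRead x ∈ Bset H p (x + c) := by
  obtain ⟨⟨v, t⟩, hfeas, hne, hcost⟩ := hy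
  refine ⟨_, bitFlip_translatePair_mem_feasible hx hfeas, fun h => hne ?_, ?_⟩
  · rw [← bitFlip_emb] at h
    exact (bitFlip_involutive x).injective h
  · rwa [innerP_Lam_add_translatePair, ← translatePair_indic, innerP_Lam_add_translatePair]

lemma add_pairRead_mem_Bset_iff {H : Fin m → Fin n → ZMod 2} {p : ℝ} {x : Fin n → ZMod 2}
    (hx : x ∈ code H) (y : Fin n → Pair) : y + pairRead x ∈ Bset H p x ↔ y ∈ Bset H p 0 := by
  refine ⟨fun h => ?_, fun h => by simpa using add_pairRead_mem_Bset hx h⟩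
  simpa [add_assoc, ZModModule.add_self] using add_pairRead_mem_Bset hx h

lemma lik_add_pairRead (p : ℝ) (y : Fin n → Pair) (x c : Fin n → ZMod 2) :
    lik p (y + pairRead x) (x + c) = lik p y c := by
  refine Finset.prod_congr rfl fun i _ => ?_
  rw [← chan_add_right p (y i) _ (pairRead x i)]
  simp only [Pi.add_apply, pairRead, Prod.mk_add_mk, add_comm]

end CodewordSymmetry

theorem stmt3_general {n m : ℕ} (H : Fin m → Fin n → ZMod 2) (p : ℝ)
    (x : Fin n → ZMod 2) (hx : x ∈ code H) :
    ∑ y : Fin n → Pair, (Bset H p x).indicator (fun y => lik p y x) y =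
      ∑ y : Fin n → Pair, (Bset H p 0).indicator (fun y => lik p y 0) y := by
  refine (Fintype.sum_equiv (Equiv.addRight (pairRead x)) _ _ fun y => ?_).symm
  have hlik : lik p (y + pairRead x) x = lik p y 0 := by
    simpa using lik_add_pairRead p y x 0
  classical
  simp only [Equiv.coe_addRight, Set.indicator_apply, add_pairRead_mem_Bset_iff hx, hlik]

/-- the error probability of the LP decoder is independent of the
transmitted codeword. -/
theorem stmt3 {n m : ℕ} (hn : 2 ≤ n) (H : Fin m → Fin n → ZMod 2)
    (p : ℝ) (hp0 : 0 < p) (hp1 : p < 3 / 4)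
    (x : Fin n → ZMod 2) (hx : x ∈ code H) :
    ∑ y : Fin n → Pair, (Bset H p x).indicator (fun y => lik p y x) y =
      ∑ y : Fin n → Pair, (Bset H p 0).indicator (fun y => lik p y 0) y :=
  stmt3_general H p x hx
end

section
/- Let x ∈ C be a codeword, (x^f,τ^f) ∈ P(H), ŷ ∈ (Σ²)^n a received pair vector, and (x^r,τ^r) the relative solution of (x^f,τ^f) to x. With λ = Λ(ŷ), λ⁰ = Λ(ŷ₀), τ = T(x), and τ⁰ = T(0), it holds that ⟨λ, τ^f − τ⟩ = ⟨λ⁰, τ^r − τ⁰⟩. -/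
open scoped BigOperators

theorem chan_add_right_s8 (p : ℝ) (y a c : Pair) : chan p (y + c) a = chan p y (a + c) := by
  simp only [chan, ← CharTwo.sub_eq_add a c, eq_sub_iff_add_eq]

theorem Lam_add_right {n : ℕ} (p : ℝ) (y c : Fin n → Pair) :
    Lam p (fun i => y i + c i) = fun i a => Lam p y i (a + c i) := by
  ext i a
  simp only [Lam, chan_add_right_s8]

theorem innerP_indic {n : ℕ} (l : Fin n → Pair → ℝ) (x : Fin n → ZMod 2) :
    innerP l (indic x) = ∑ i, l i (x i, x (nxt i)) := by
  simp [innerP, indic]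

theorem innerP_translate {n : ℕ} (l t : Fin n → Pair → ℝ) (c : Fin n → Pair) :
    innerP (fun i a => l i (a + c i)) (fun i a => t i (a + c i)) = innerP l t :=
  Finset.sum_congr rfl fun i _ =>
    Equiv.sum_comp (Equiv.addRight (c i)) fun a => l i a * t i a

theorem stmt8_general {n : ℕ} (p : ℝ) (x : Fin n → ZMod 2) (tf : Fin n → Pair → ℝ) (y : Fin n → Pair) :
    innerP (Lam p y) tf - innerP (Lam p y) (indic x) =
      innerP (Lam p (fun i => y i + (x i, x (nxt i))))
          (fun i ab => tf i (ab + (x i, x (nxt i)))) -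
        innerP (Lam p (fun i => y i + (x i, x (nxt i)))) (indic 0) := by
  rw [Lam_add_right, innerP_translate, innerP_indic, innerP_indic]
  simp only [Pi.zero_apply, Prod.mk_zero_zero, zero_add]

/-- `⟨λ, τ^f − T(x)⟩ = ⟨λ⁰, τ^r − T(0)⟩` for the relative solution. -/
theorem stmt8 {n m : ℕ} (hn : 2 ≤ n) (H : Fin m → Fin n → ZMod 2)
    (p : ℝ) (hp0 : 0 < p) (hp1 : p < 3 / 4)
    (x : Fin n → ZMod 2) (hx : x ∈ code H)
    (xf : Fin n → ℝ) (tf : Fin n → Pair → ℝ)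
    (hfeas : (xf, tf) ∈ feasible H)
    (y : Fin n → Pair) :
    innerP (Lam p y) tf - innerP (Lam p y) (indic x) =
      innerP (Lam p (fun i => y i + (x i, x (nxt i))))
          (fun i ab => tf i (ab + (x i, x (nxt i)))) -
        innerP (Lam p (fun i => y i + (x i, x (nxt i)))) (indic 0) :=
  stmt8_general p x tf y
end
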